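/- If G is an HZ-graph with maximum degree Δ ≥ 3, then every vertex of G has at least two neighbors of degree Δ. -/

import Mathlib

open SimpleGraph

/-- A proper edge `k`-coloring of `G` with colors in `[1, k]`. -/
def IsProperEdgeColoring {V : Type*} (G : SimpleGraph V) (k : ℕ) (c : Sym2 V → ℕ) : Prop :=
  (∀ e ∈ G.edgeSet, c e ∈ Finset.Icc 1 k) ∧
  ∀ e ∈ G.edgeSet, ∀ f ∈ G.edgeSet, e ≠ f → (∃ v : V, v ∈ e ∧ v ∈ f) → c e ≠ c f

/-- `G` has a proper edge coloring with `k` colors. -/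
def EdgeColorable {V : Type*} (G : SimpleGraph V) (k : ℕ) : Prop :=
  ∃ c : Sym2 V → ℕ, IsProperEdgeColoring G k c

/-- The set of colors of `[1, k]` missing at `v`. -/
def missingColors {V : Type*} (G : SimpleGraph V) (k : ℕ) (c : Sym2 V → ℕ) (v : V) : Set ℕ :=
  {α | α ∈ Finset.Icc 1 k ∧ ¬ ∃ e ∈ G.edgeSet, v ∈ e ∧ c e = α}

/-- The subgraph of `G` consisting of the edges colored `α` or `β`;
its components are the `(α, β)`-chains. -/
def chainGraph {V : Type*} (G : SimpleGraph V) (c : Sym2 V → ℕ) (α β : ℕ) : SimpleGraph V :=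
  SimpleGraph.fromEdgeSet {e ∈ G.edgeSet | c e = α ∨ c e = β}

/-!
Let `Δ` be the maximum degree of `G`. As `G` is not `Δ`-edge-colourable, it has a subgraph `H`
that is not `Δ`-edge-colourable while `H - xy` is, for every edge `xy` of `H`. Vizing's adjacency
lemma applies to every such edge: `Δ + 1 ≤ deg x + d`, where `d` counts the neighbours of `y`
other than `x` of degree `Δ`. It is proved with a maximal multifan at `y` for a colouring of
`H - xy`: the colours missing at its vertices are colours of fan edges, and no colour is missing at
two fan vertices (otherwise a Kempe change along a suitable `(α, β)`-chain, which is a path, frees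
a colour at `y` and at a fan vertex, and shifting colours along the fan completes the colouring).
Counting missing colours gives the inequality.

Hence every non-isolated vertex of `H` has two neighbours of degree `Δ`. If a vertex `u` of `H`
missed an edge of `G`, the lemma applied to `u` and a neighbour of degree `Δ` would give that
neighbour three neighbours of degree `Δ` in `G`, which the core condition forbids. So the vertices
of `H` keep all their edges, and `H = G` by connectivity.
-/

section VizingAdjacency

open Finset

variable {V : Type*}

section Graphs

variable {G : SimpleGraph V}

lemma mem_edgeSet_deleteEdges_singleton {e f : Sym2 V} :
    f ∈ (G.deleteEdges {e}).edgeSet ↔ f ∈ G.edgeSet ∧ f ≠ e := by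
  simp [edgeSet_deleteEdges]

lemma degree_deleteEdges_singleton_lt {e : Sym2 V} {v : V} [Fintype (G.neighborSet v)]
    [Fintype ((G.deleteEdges {e}).neighborSet v)] (he : e ∈ G.edgeSet) (hv : v ∈ e) :
    (G.deleteEdges {e}).degree v < G.degree v := by
  obtain ⟨w, rfl⟩ := Sym2.mem_iff_exists.1 hv
  simp_rw [← card_neighborSet_eq_degree]
  refine Set.card_lt_card ⟨fun u hu ↦ deleteEdges_le _ hu, fun h ↦ ?_⟩
  simpa using h (show w ∈ G.neighborSet v from he)

lemma degree_induce_setOf [Fintype V] [DecidableRel G.Adj] {p : V → Prop} [DecidablePred p]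
    (v : {w | p w}) [Fintype ((G.induce {w | p w}).neighborSet v)] :
    (G.induce {w | p w}).degree v = #{w ∈ G.neighborFinset v | p w} := by
  rw [← card_neighborFinset_eq_degree, ← card_map (.subtype _)]
  congr 1
  ext w
  simp [and_comm]

lemma SimpleGraph.Reachable.mem_of_adj_mem {s : Set V} (hs : ∀ u v, G.Adj u v → u ∈ s → v ∈ s)
    {u v : V} (huv : G.Reachable u v) (hu : u ∈ s) : v ∈ s := by
  obtain ⟨p⟩ := huv
  induction p with
  | nil => exact hu
  | cons h _ ih => exact ih (hs _ _ h hu)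

/-- A connected graph of maximum degree at most two has at least `n - 1` edges, so its degree sum
`2 #E` leaves room for at most two vertices of degree at most one. -/
lemma SimpleGraph.Connected.card_degree_le_one_le_two {W : Type*} [Fintype W]
    {C : SimpleGraph W} [DecidableRel C.Adj] (hC : C.Connected) (hdeg : ∀ v, C.degree v ≤ 2) :
    #{v | C.degree v ≤ 1} ≤ 2 := by
  have hedges := hC.card_vert_le_card_edgeSet_add_one
  rw [Nat.card_eq_fintype_card, Nat.card_eq_fintype_card, ← edgeFinset_card] at hedges
  have hsum : ∑ v, C.degree v + #{v | C.degree v ≤ 1} ≤ 2 * Fintype.card W := by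
    rw [card_filter, ← sum_add_distrib, Fintype.card_eq_sum_ones, mul_sum]
    exact sum_le_sum fun v _ ↦ by have := hdeg v; split_ifs <;> omega
  have := C.sum_degrees_eq_twice_card_edges
  omega

lemma SimpleGraph.Reachable.not_reachable_of_degree_le_one {C : SimpleGraph V} [Fintype V]
    [DecidableRel C.Adj] (hdeg : ∀ v, C.degree v ≤ 2) {a b d : V} (hab : a ≠ b) (had : a ≠ d)
    (hbd : b ≠ d) (ha : C.degree a ≤ 1) (hb : C.degree b ≤ 1) (hd : C.degree d ≤ 1)
    (hrab : C.Reachable a b) : ¬ C.Reachable a d := by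
  classical
  intro hrad
  set K := C.connectedComponentMk a
  have hdegK (v : K) : K.toSimpleGraph.degree v = C.degree v := by
    have h : C.neighborSet v ⊆ K.supp := fun w hw ↦
      ((ConnectedComponent.connectedComponentMk_eq_of_adj hw).symm.trans v.2 :)
    rw [← card_neighborFinset_eq_degree, ← card_neighborFinset_eq_degree,
      ← map_neighborFinset_induce_of_neighborSet_subset h, card_map]
    congr 1
    ext w
    simp only [mem_neighborFinset]
    rfl
  have hK := K.connected_toSimpleGraph.card_degree_le_one_le_two fun v ↦
    (hdegK v).trans_le (hdeg v)
  have hsub : ({⟨a, rfl⟩, ⟨b, ConnectedComponent.sound hrab.symm⟩,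
      ⟨d, ConnectedComponent.sound hrad.symm⟩} : Finset K) ⊆
      ({v | K.toSimpleGraph.degree v ≤ 1} : Finset K) := by
    intro v hv
    simp only [mem_insert, mem_singleton] at hv
    rcases hv with rfl | rfl | rfl <;> simpa [hdegK]
  have := card_le_card hsub
  rw [card_insert_of_notMem (by simp [Subtype.ext_iff, hab, had]),
    card_pair (by simp [Subtype.ext_iff, hbd])] at this
  omega

end Graphs

section Colorings

variable {G G' : SimpleGraph V} {k : ℕ} {c : Sym2 V → ℕ}

lemma IsProperEdgeColoring.mono (hc : IsProperEdgeColoring G k c) (h : G' ≤ G) :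
    IsProperEdgeColoring G' k c :=
  ⟨fun e he ↦ hc.1 e (edgeSet_mono h he),
    fun e he f hf ↦ hc.2 e (edgeSet_mono h he) f (edgeSet_mono h hf)⟩

lemma IsProperEdgeColoring.eq_of_color_eq (hc : IsProperEdgeColoring G k c) {v : V}
    {e f : Sym2 V} (he : e ∈ G.edgeSet) (hf : f ∈ G.edgeSet) (hve : v ∈ e) (hvf : v ∈ f)
    (hcol : c e = c f) : e = f := by
  by_contra hne
  exact hc.2 e he f hf hne ⟨v, hve, hvf⟩ hcol

lemma missingColors_anti (h : G' ≤ G) (v : V) :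
    missingColors G k c v ⊆ missingColors G' k c v :=
  fun _ ⟨hα, hne⟩ ↦ ⟨hα, fun ⟨e, he, hv, hc⟩ ↦ hne ⟨e, edgeSet_mono h he, hv, hc⟩⟩

open Classical in
lemma le_card_missingColors_add_degree (v : V) [Fintype (G.neighborSet v)] :
    k ≤ #{α ∈ Icc 1 k | α ∈ missingColors G k c v} + G.degree v := by
  rw [← card_neighborFinset_eq_degree]
  calc k = #(Icc 1 k) := by simp
    _ ≤ #({α ∈ Icc 1 k | α ∈ missingColors G k c v} ∪
          (G.neighborFinset v).image fun w ↦ c s(v, w)) := card_le_card fun α hα ↦ ?_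
    _ ≤ _ := (card_union_le _ _).trans (Nat.add_le_add_left card_image_le _)
  by_cases hm : α ∈ missingColors G k c v
  · exact mem_union_left _ (mem_filter.2 ⟨hα, hm⟩)
  · obtain ⟨e, he, hve, rfl⟩ := not_not.1 fun h ↦ hm ⟨hα, h⟩
    obtain ⟨w, rfl⟩ := Sym2.mem_iff_exists.1 hve
    exact mem_union_right _ (mem_image.2 ⟨w, by simpa using he, rfl⟩)

lemma exists_mem_missingColors_of_degree_lt {v : V} [Fintype (G.neighborSet v)]
    (hv : G.degree v < k) : ∃ α, α ∈ missingColors G k c v := by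
  classical
  have := le_card_missingColors_add_degree (G := G) (k := k) (c := c) v
  obtain ⟨α, hα⟩ := card_pos.1 (by omega :
    0 < #{α ∈ Icc 1 k | α ∈ missingColors G k c v})
  exact ⟨α, (mem_filter.1 hα).2⟩

lemma exists_adj_of_not_edgeColorable (h : ¬ EdgeColorable G k) : ∃ x y, G.Adj x y := by
  by_contra! hG
  refine h ⟨fun _ ↦ 1, fun e he ↦ ?_, fun e he ↦ ?_⟩ <;>
  · induction e with
    | h x y => exact absurd he (hG x y)

lemma exists_critical_subgraph [Finite V] (h : ¬ EdgeColorable G k) : ∃ H ≤ G,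
    ¬ EdgeColorable H k ∧ ∀ x y, H.Adj x y → EdgeColorable (H.deleteEdges {s(x, y)}) k := by
  obtain ⟨H, hHG, hmin⟩ := exists_minimal_le_of_wellFoundedLT (¬ EdgeColorable · k) G h
  refine ⟨H, hHG, hmin.prop, fun x y hxy ↦ not_not.1 fun hnc ↦ ?_⟩
  simpa using hmin.2 hnc (deleteEdges_le _) hxy

lemma IsProperEdgeColoring.update [DecidableEq V] {x y : V} {α : ℕ}
    (hc : IsProperEdgeColoring (G.deleteEdges {s(x, y)}) k c)
    (hx : α ∈ missingColors (G.deleteEdges {s(x, y)}) k c x)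
    (hy : α ∈ missingColors (G.deleteEdges {s(x, y)}) k c y) :
    IsProperEdgeColoring G k (Function.update c s(x, y) α) := by
  have hmeet : ∀ f ∈ G.edgeSet, f ≠ s(x, y) → ∀ v ∈ s(x, y), v ∈ f → c f ≠ α := by
    intro f hf hne v hv hvf hcf
    have hf' := mem_edgeSet_deleteEdges_singleton.2 ⟨hf, hne⟩
    rcases Sym2.mem_iff.1 hv with rfl | rfl
    · exact hx.2 ⟨f, hf', hvf, hcf⟩
    · exact hy.2 ⟨f, hf', hvf, hcf⟩
  refine ⟨fun e he ↦ ?_, fun e he f hf hef ⟨v, hve, hvf⟩ ↦ ?_⟩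
  · by_cases h : e = s(x, y)
    · simpa [h] using hx.1
    · rw [Function.update_of_ne h]
      exact hc.1 e (mem_edgeSet_deleteEdges_singleton.2 ⟨he, h⟩)
  · by_cases h1 : e = s(x, y) <;> by_cases h2 : f = s(x, y)
    · exact absurd (h1.trans h2.symm) hef
    · rw [Function.update_of_ne h2, h1, Function.update_self]
      exact (hmeet f hf h2 v (h1 ▸ hve) hvf).symm
    · rw [Function.update_of_ne h1, h2, Function.update_self]
      exact hmeet e he h1 v (h2 ▸ hvf) hve
    · rw [Function.update_of_ne h1, Function.update_of_ne h2]
      exact hc.2 e (mem_edgeSet_deleteEdges_singleton.2 ⟨he, h1⟩) f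
        (mem_edgeSet_deleteEdges_singleton.2 ⟨hf, h2⟩) hef ⟨v, hve, hvf⟩

lemma IsProperEdgeColoring.rotate [DecidableEq V] {y a b : V} (hyb : G.Adj y b) (hab : a ≠ b)
    (hc : IsProperEdgeColoring (G.deleteEdges {s(y, a)}) k c)
    (hmiss : c s(y, b) ∈ missingColors (G.deleteEdges {s(y, a)}) k c a) :
    IsProperEdgeColoring (G.deleteEdges {s(y, b)}) k
      (Function.update c s(y, a) (c s(y, b))) := by
  have hb : s(y, b) ∈ (G.deleteEdges {s(y, a)}).edgeSet :=
    mem_edgeSet_deleteEdges_singleton.2 ⟨hyb, fun h ↦ hab (Sym2.congr_right.1 h).symm⟩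
  have hG : (G.deleteEdges {s(y, b)}).deleteEdges {s(y, a)} =
      (G.deleteEdges {s(y, a)}).deleteEdges {s(y, b)} := by
    simp only [deleteEdges_deleteEdges, Set.union_comm]
  refine IsProperEdgeColoring.update ?_ ?_ ?_ <;> rw [hG]
  · exact hc.mono (deleteEdges_le _)
  · refine ⟨hc.1 _ hb, fun ⟨f, hf, hyf, hcf⟩ ↦ ?_⟩
    obtain ⟨hf', hfb⟩ := mem_edgeSet_deleteEdges_singleton.1 hf
    exact hfb (hc.eq_of_color_eq hf' hb hyf (Sym2.mem_mk_left _ _) hcf)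
  · exact missingColors_anti (deleteEdges_le _) a hmiss

lemma missingColors_rotate [DecidableEq V] {y a b : V} (hya : G.Adj y a) (hyb : G.Adj y b)
    (hab : a ≠ b) :
    missingColors (G.deleteEdges {s(y, b)}) k (Function.update c s(y, a) (c s(y, b))) y =
      missingColors (G.deleteEdges {s(y, a)}) k c y := by
  have hne : s(y, a) ≠ s(y, b) := fun h ↦ hab (Sym2.congr_right.1 h)
  ext α
  refine and_congr_right fun _ ↦ not_congr ⟨?_, ?_⟩
  · rintro ⟨f, hf, hyf, rfl⟩
    obtain ⟨hf', hfb⟩ := mem_edgeSet_deleteEdges_singleton.1 hf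
    by_cases hfa : f = s(y, a)
    · exact ⟨s(y, b), mem_edgeSet_deleteEdges_singleton.2 ⟨hyb, hne.symm⟩,
        Sym2.mem_mk_left _ _, by rw [hfa, Function.update_self]⟩
    · exact ⟨f, mem_edgeSet_deleteEdges_singleton.2 ⟨hf', hfa⟩, hyf,
        (Function.update_of_ne hfa _ _).symm⟩
  · rintro ⟨f, hf, hyf, rfl⟩
    obtain ⟨hf', hfa⟩ := mem_edgeSet_deleteEdges_singleton.1 hf
    by_cases hfb : f = s(y, b)
    · exact ⟨s(y, a), mem_edgeSet_deleteEdges_singleton.2 ⟨hya, hne⟩,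
        Sym2.mem_mk_left _ _, by rw [Function.update_self, hfb]⟩
    · exact ⟨f, mem_edgeSet_deleteEdges_singleton.2 ⟨hf', hfb⟩, hyf,
        Function.update_of_ne hfa _ _⟩

lemma missingColors_subset_of_eq_of_notMem {d : Sym2 V → ℕ} {x y v : V} (hvy : v ≠ y)
    (hdc : ∀ e, y ∉ e → d e = c e) :
    missingColors (G.deleteEdges {s(x, y)}) k c v ⊆
      missingColors (G.deleteEdges {s(y, v)}) k d v := by
  rintro α ⟨hα, hpres⟩
  refine ⟨hα, fun ⟨f, hf, hvf, hdf⟩ ↦ hpres ⟨f, ?_, hvf, ?_⟩⟩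
  all_goals
    obtain ⟨hf', hfyv⟩ := mem_edgeSet_deleteEdges_singleton.1 hf
    have hyf : y ∉ f := fun hyf ↦ hfyv ((Sym2.mem_and_mem_iff hvy.symm).1 ⟨hyf, hvf⟩)
  · exact mem_edgeSet_deleteEdges_singleton.2 ⟨hf', fun h ↦ hyf (h ▸ Sym2.mem_mk_right _ _)⟩
  · rw [← hdf, hdc f hyf]

end Colorings

section Kempe

variable {G : SimpleGraph V} {k : ℕ} {c : Sym2 V → ℕ} {α β : ℕ} {u v : V}

lemma chainGraph_adj {a b : V} :
    (chainGraph G c α β).Adj a b ↔ G.Adj a b ∧ (c s(a, b) = α ∨ c s(a, b) = β) := by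
  simp only [chainGraph, fromEdgeSet_adj, Set.mem_ofPred_eq, mem_edgeSet]
  exact ⟨fun h ↦ h.1, fun h ↦ ⟨h, h.1.ne⟩⟩

lemma IsProperEdgeColoring.degree_chainGraph_le_card
    [Fintype ((chainGraph G c α β).neighborSet v)] (hc : IsProperEdgeColoring G k c)
    (s : Finset ℕ)
    (hs : ∀ w, (chainGraph G c α β).Adj v w → c s(v, w) ∈ s) :
    (chainGraph G c α β).degree v ≤ #s := by
  rw [← card_neighborFinset_eq_degree]
  refine card_le_card_of_injOn (fun w ↦ c s(v, w)) (fun w hw ↦ hs w (by simpa using hw)) ?_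
  intro w₁ hw₁ w₂ hw₂ h
  have h₁ := (chainGraph_adj.1 (by simpa using hw₁)).1
  have h₂ := (chainGraph_adj.1 (by simpa using hw₂)).1
  exact Sym2.congr_right.1 (hc.eq_of_color_eq h₁ h₂ (Sym2.mem_mk_left _ _)
    (Sym2.mem_mk_left _ _) h)

lemma IsProperEdgeColoring.degree_chainGraph_le_two
    [Fintype ((chainGraph G c α β).neighborSet v)] (hc : IsProperEdgeColoring G k c) :
    (chainGraph G c α β).degree v ≤ 2 :=
  (hc.degree_chainGraph_le_card {α, β} fun _ h ↦ by
    simpa using (chainGraph_adj.1 h).2).trans card_le_two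

lemma IsProperEdgeColoring.degree_chainGraph_le_one
    [Fintype ((chainGraph G c α β).neighborSet v)] (hc : IsProperEdgeColoring G k c)
    (hv : α ∈ missingColors G k c v ∨ β ∈ missingColors G k c v) :
    (chainGraph G c α β).degree v ≤ 1 := by
  have hpres {γ : ℕ} (hγ : γ ∈ missingColors G k c v) (w : V) (hw : G.Adj v w) :
      c s(v, w) ≠ γ :=
    fun h ↦ hγ.2 ⟨s(v, w), hw, Sym2.mem_mk_left _ _, h⟩
  rcases hv with hv | hv
  · refine (hc.degree_chainGraph_le_card {β} fun w h ↦ ?_).trans (card_singleton _).le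
    obtain ⟨hw, hα | hβ⟩ := chainGraph_adj.1 h
    exacts [absurd hα (hpres hv w hw), mem_singleton.2 hβ]
  · refine (hc.degree_chainGraph_le_card {α} fun w h ↦ ?_).trans (card_singleton _).le
    obtain ⟨hw, hα | hβ⟩ := chainGraph_adj.1 h
    exacts [mem_singleton.2 hα, absurd hβ (hpres hv w hw)]

open Classical in
noncomputable def kempeSwap (G : SimpleGraph V) (c : Sym2 V → ℕ) (α β : ℕ) (u : V) :
    Sym2 V → ℕ :=
  fun e ↦ if ∃ v ∈ e, (chainGraph G c α β).Reachable u v then Equiv.swap α β (c e) else c e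

lemma kempeSwap_of_reachable {e : Sym2 V} (hve : v ∈ e)
    (hv : (chainGraph G c α β).Reachable u v) :
    kempeSwap G c α β u e = Equiv.swap α β (c e) :=
  if_pos ⟨v, hve, hv⟩

lemma kempeSwap_of_not_reachable {e : Sym2 V} (he : e ∈ G.edgeSet) (hve : v ∈ e)
    (hv : ¬ (chainGraph G c α β).Reachable u v) : kempeSwap G c α β u e = c e := by
  obtain ⟨w, rfl⟩ := Sym2.mem_iff_exists.1 hve
  by_cases hcol : c s(v, w) = α ∨ c s(v, w) = β
  · have hvw : (chainGraph G c α β).Adj v w := chainGraph_adj.2 ⟨he, hcol⟩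
    refine if_neg fun ⟨t, ht, hut⟩ ↦ hv ?_
    rcases Sym2.mem_iff.1 ht with rfl | rfl
    exacts [hut, hut.trans hvw.symm.reachable]
  · rw [not_or] at hcol
    unfold kempeSwap
    split_ifs
    exacts [Equiv.swap_apply_of_ne_of_ne hcol.1 hcol.2, rfl]

lemma swap_mem_Icc {γ : ℕ} (hα : α ∈ Icc 1 k) (hβ : β ∈ Icc 1 k) (hγ : γ ∈ Icc 1 k) :
    Equiv.swap α β γ ∈ Icc 1 k := by
  rw [Equiv.swap_apply_def]
  split_ifs <;> assumption

lemma IsProperEdgeColoring.kempeSwap (hc : IsProperEdgeColoring G k c) (hα : α ∈ Icc 1 k)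
    (hβ : β ∈ Icc 1 k) : IsProperEdgeColoring G k (kempeSwap G c α β u) := by
  refine ⟨fun e he ↦ ?_, fun e he f hf hef ⟨v, hve, hvf⟩ ↦ ?_⟩
  · unfold _root_.kempeSwap
    split_ifs
    exacts [swap_mem_Icc hα hβ (hc.1 e he), hc.1 e he]
  · by_cases hv : (chainGraph G c α β).Reachable u v
    · rw [kempeSwap_of_reachable hve hv, kempeSwap_of_reachable hvf hv]
      exact (Equiv.swap α β).injective.ne (hc.2 e he f hf hef ⟨v, hve, hvf⟩)
    · rw [kempeSwap_of_not_reachable he hve hv, kempeSwap_of_not_reachable hf hvf hv]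
      exact hc.2 e he f hf hef ⟨v, hve, hvf⟩

lemma mem_missingColors_kempeSwap_of_reachable {γ : ℕ} (hα : α ∈ Icc 1 k) (hβ : β ∈ Icc 1 k)
    (hv : (chainGraph G c α β).Reachable u v) :
    γ ∈ missingColors G k (kempeSwap G c α β u) v ↔
      Equiv.swap α β γ ∈ missingColors G k c v := by
  have hIcc : γ ∈ Icc 1 k ↔ Equiv.swap α β γ ∈ Icc 1 k :=
    ⟨swap_mem_Icc hα hβ, fun h ↦ by simpa using swap_mem_Icc hα hβ h⟩
  refine and_congr hIcc (not_congr ⟨fun ⟨e, he, hve, hγ⟩ ↦ ⟨e, he, hve, ?_⟩,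
    fun ⟨e, he, hve, hγ⟩ ↦ ⟨e, he, hve, ?_⟩⟩)
  · rwa [kempeSwap_of_reachable hve hv, Equiv.swap_apply_eq_iff] at hγ
  · rw [kempeSwap_of_reachable hve hv, hγ, Equiv.swap_apply_self]

lemma missingColors_kempeSwap_of_not_reachable (hv : ¬ (chainGraph G c α β).Reachable u v) :
    missingColors G k (kempeSwap G c α β u) v = missingColors G k c v := by
  ext γ
  refine and_congr_right fun _ ↦ not_congr ⟨fun ⟨e, he, hve, hγ⟩ ↦ ⟨e, he, hve, ?_⟩,
    fun ⟨e, he, hve, hγ⟩ ↦ ⟨e, he, hve, ?_⟩⟩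
  · rwa [kempeSwap_of_not_reachable he hve hv] at hγ
  · rwa [kempeSwap_of_not_reachable he hve hv]

end Kempe

/-- A multifan at `y` with respect to the uncoloured edge `xy` and a colouring `c` of `G - xy`:
distinct neighbours `z 0 = x, z 1, …, z p` of `y` such that the colour of each edge `y (z l)`
is missing at some earlier `z m`. -/
structure IsMultifan (G : SimpleGraph V) (k : ℕ) (c : Sym2 V → ℕ) (x y : V) (p : ℕ)
    (z : ℕ → V) : Prop where
  zero : z 0 = x
  adj : ∀ i ≤ p, G.Adj y (z i)
  injOn : ∀ i ≤ p, ∀ j ≤ p, z i = z j → i = j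
  parent : ∀ l, 1 ≤ l → l ≤ p →
    ∃ m < l, c s(y, z l) ∈ missingColors (G.deleteEdges {s(x, y)}) k c (z m)

namespace IsMultifan

variable {G : SimpleGraph V} {k : ℕ} {c : Sym2 V → ℕ} {x y : V} {p : ℕ} {z : ℕ → V}

lemma mono (hz : IsMultifan G k c x y p z) {q : ℕ} (hq : q ≤ p) : IsMultifan G k c x y q z :=
  ⟨hz.zero, fun i hi ↦ hz.adj i (hi.trans hq),
    fun i hi j hj ↦ hz.injOn i (hi.trans hq) j (hj.trans hq),
    fun l hl hlq ↦ hz.parent l hl (hlq.trans hq)⟩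

lemma ne (hz : IsMultifan G k c x y p z) {i j : ℕ} (hi : i ≤ p) (hj : j ≤ p)
    (hij : i ≠ j) : z i ≠ z j :=
  fun h ↦ hij (hz.injOn i hi j hj h)

lemma mem_edgeSet (hz : IsMultifan G k c x y p z) {l : ℕ} (hl : 1 ≤ l) (hlp : l ≤ p) :
    s(y, z l) ∈ (G.deleteEdges {s(x, y)}).edgeSet := by
  refine mem_edgeSet_deleteEdges_singleton.2 ⟨hz.adj l hlp, fun h ↦ ?_⟩
  rcases Sym2.eq_iff.1 h with ⟨hyx, -⟩ | ⟨-, hzx⟩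
  · exact (hz.adj 0 (by omega)).ne (hyx.trans hz.zero.symm)
  · exact hz.ne hlp (by omega) (by omega) (hzx.trans hz.zero.symm)

lemma card_filter_le (hz : IsMultifan G k c x y p z) [Fintype (G.neighborSet y)]
    [DecidableEq V] (P : V → Prop) [DecidablePred P] :
    #{l ∈ Icc 1 p | P (z l)} ≤ #{u ∈ G.neighborFinset y | u ≠ x ∧ P u} := by
  refine card_le_card_of_injOn z (fun l hl ↦ ?_) fun l hl l' hl' h ↦ ?_
  · simp only [coe_filter, mem_Icc, Set.mem_ofPred_eq] at hl
    simp only [coe_filter, mem_neighborFinset, Set.mem_ofPred_eq]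
    exact ⟨hz.adj l hl.1.2,
      fun h ↦ hz.ne hl.1.2 (Nat.zero_le p) (by omega) (h.trans hz.zero.symm), hl.2⟩
  · simp only [coe_filter, mem_Icc, Set.mem_ofPred_eq] at hl hl'
    exact hz.injOn l hl.1.2 l' hl'.1.2 h

lemma lt_card [Fintype V] (hz : IsMultifan G k c x y p z) : p < Fintype.card V := by
  have : Function.Injective fun i : Fin (p + 1) ↦ z i :=
    fun i j h ↦ Fin.ext (hz.injOn i (by omega) j (by omega) h)
  simpa using Fintype.card_le_of_injective _ this

lemma exists_maximal [Fintype V] (hxy : G.Adj x y) :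
    ∃ p z, IsMultifan G k c x y p z ∧ ∀ q w, IsMultifan G k c x y q w → q ≤ p := by
  classical
  have h0 : IsMultifan G k c x y 0 fun _ ↦ x :=
    ⟨rfl, fun _ _ ↦ hxy.symm, fun i _ j _ _ ↦ by omega, fun l hl hl0 ↦ by omega⟩
  obtain ⟨z, hz⟩ := Nat.findGreatest_spec (P := fun p ↦ ∃ z, IsMultifan G k c x y p z)
    (Nat.zero_le (Fintype.card V)) ⟨_, h0⟩
  exact ⟨_, z, hz, fun q w hw ↦ Nat.le_findGreatest hw.lt_card.le ⟨w, hw⟩⟩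

lemma snoc (hz : IsMultifan G k c x y p z) {w : V} (hyw : G.Adj y w) (hw : ∀ i ≤ p, z i ≠ w)
    {m : ℕ} (hm : m ≤ p)
    (hmiss : c s(y, w) ∈ missingColors (G.deleteEdges {s(x, y)}) k c (z m)) :
    IsMultifan G k c x y (p + 1) (Function.update z (p + 1) w) := by
  have hz' : ∀ i ≤ p, Function.update z (p + 1) w i = z i :=
    fun i hi ↦ Function.update_of_ne (by omega) _ _
  refine ⟨by rw [hz' 0 (Nat.zero_le _), hz.zero], fun i hi ↦ ?_, fun i hi j hj h ↦ ?_,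
    fun l hl hlp ↦ ?_⟩
  · rcases hi.lt_or_eq with hi | rfl
    · rw [hz' i (by omega)]
      exact hz.adj i (by omega)
    · rwa [Function.update_self]
  · rcases hi.lt_or_eq with hi | rfl <;> rcases hj.lt_or_eq with hj | rfl
    · rw [hz' i (by omega), hz' j (by omega)] at h
      exact hz.injOn i (by omega) j (by omega) h
    · rw [hz' i (by omega), Function.update_self] at h
      exact absurd h (hw i (by omega))
    · rw [hz' j (by omega), Function.update_self] at h
      exact absurd h.symm (hw j (by omega))
    · rfl
  · rcases hlp.lt_or_eq with hlp | rfl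
    · obtain ⟨m', hm', hmiss'⟩ := hz.parent l hl (by omega)
      exact ⟨m', hm', by rwa [hz' l (by omega), hz' m' (by omega)]⟩
    · exact ⟨m, by omega, by rwa [Function.update_self, hz' m hm]⟩

variable [DecidableEq V]

/-- Shifting colours along the chain of parents from `x` to `z i`: each edge `y (z m)` on the
chain takes the colour of the next one, which is missing at `z m`. -/
lemma exists_shift (hc : IsProperEdgeColoring (G.deleteEdges {s(x, y)}) k c)
    (hz : IsMultifan G k c x y p z) {i : ℕ} (hi : i ≤ p) :
    ∃ d, IsProperEdgeColoring (G.deleteEdges {s(y, z i)}) k d ∧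
      missingColors (G.deleteEdges {s(y, z i)}) k d y =
        missingColors (G.deleteEdges {s(x, y)}) k c y ∧
      (∀ e, y ∉ e → d e = c e) ∧ ∀ l, i < l → l ≤ p → d s(y, z l) = c s(y, z l) := by
  induction i using Nat.strong_induction_on with
  | _ i ih =>
  rcases Nat.eq_zero_or_pos i with rfl | hi0
  · rw [hz.zero, Sym2.eq_swap]
    exact ⟨c, hc, rfl, fun _ _ ↦ rfl, fun _ _ _ ↦ rfl⟩
  obtain ⟨m, hmi, hmiss⟩ := hz.parent i hi0 hi
  obtain ⟨d, hd, hdy, hdoff, hdon⟩ := ih m hmi (by omega)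
  have hzmi : z m ≠ z i := hz.ne (by omega) hi hmi.ne
  have hγ : d s(y, z i) = c s(y, z i) := hdon i hmi hi
  refine ⟨Function.update d s(y, z m) (d s(y, z i)), hd.rotate (hz.adj i hi) hzmi ?_, ?_,
    fun e he ↦ ?_, fun l hil hl ↦ ?_⟩
  · rw [hγ]
    exact missingColors_subset_of_eq_of_notMem (hz.adj m (by omega)).ne' hdoff hmiss
  · rw [missingColors_rotate (hz.adj m (by omega)) (hz.adj i hi) hzmi, hdy]
  · rw [Function.update_of_ne (by rintro rfl; exact he (Sym2.mem_mk_left _ _)), hdoff e he]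
  · have hlm : s(y, z l) ≠ s(y, z m) :=
      fun h ↦ hz.ne hl (by omega) (by omega) (Sym2.congr_right.1 h)
    rw [Function.update_of_ne hlm, hdon l (by omega) hl]

lemma edgeColorable_of_mem_missingColors
    (hc : IsProperEdgeColoring (G.deleteEdges {s(x, y)}) k c) (hz : IsMultifan G k c x y p z)
    {i : ℕ} (hi : i ≤ p) {α : ℕ} (hαz : α ∈ missingColors (G.deleteEdges {s(x, y)}) k c (z i))
    (hαy : α ∈ missingColors (G.deleteEdges {s(x, y)}) k c y) : EdgeColorable G k := by
  obtain ⟨d, hd, hdy, hdoff, -⟩ := hz.exists_shift hc hi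
  exact ⟨_, hd.update (hdy ▸ hαy)
    (missingColors_subset_of_eq_of_notMem (hz.adj i hi).ne' hdoff hαz)⟩

/-- The Kempe change on the `(α, β)`-chain through `z p` keeps the multifan (the chain avoids `y`,
so no fan edge is recoloured) and makes `β` missing at both `z p` and `y`. -/
lemma edgeColorable_of_not_reachable
    (hc : IsProperEdgeColoring (G.deleteEdges {s(x, y)}) k c) (hz : IsMultifan G k c x y p z)
    {α β : ℕ} (hα : α ∈ missingColors (G.deleteEdges {s(x, y)}) k c (z p))
    (hβ : β ∈ missingColors (G.deleteEdges {s(x, y)}) k c y)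
    (hy : ¬ (chainGraph (G.deleteEdges {s(x, y)}) c α β).Reachable (z p) y)
    (hprev : ∀ m < p, α ∈ missingColors (G.deleteEdges {s(x, y)}) k c (z m) →
      ¬ (chainGraph (G.deleteEdges {s(x, y)}) c α β).Reachable (z p) (z m)) :
    EdgeColorable G k := by
  have hd : IsProperEdgeColoring (G.deleteEdges {s(x, y)}) k
      (kempeSwap (G.deleteEdges {s(x, y)}) c α β (z p)) := hc.kempeSwap hα.1 hβ.1
  have hdy : β ∈ missingColors (G.deleteEdges {s(x, y)}) k
      (kempeSwap (G.deleteEdges {s(x, y)}) c α β (z p)) y := by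
    rwa [missingColors_kempeSwap_of_not_reachable hy]
  have hdz : β ∈ missingColors (G.deleteEdges {s(x, y)}) k
      (kempeSwap (G.deleteEdges {s(x, y)}) c α β (z p)) (z p) := by
    rwa [mem_missingColors_kempeSwap_of_reachable hα.1 hβ.1 Reachable.rfl,
      Equiv.swap_apply_right]
  refine IsMultifan.edgeColorable_of_mem_missingColors hd
    ⟨hz.zero, hz.adj, hz.injOn, fun l hl hlp ↦ ?_⟩ le_rfl hdz hdy
  obtain ⟨m, hml, hmiss⟩ := hz.parent l hl hlp
  have hyl := hz.mem_edgeSet hl hlp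
  rw [kempeSwap_of_not_reachable hyl (Sym2.mem_mk_left _ _) hy]
  refine ⟨m, hml, ?_⟩
  by_cases hm : (chainGraph (G.deleteEdges {s(x, y)}) c α β).Reachable (z p) (z m)
  · rw [mem_missingColors_kempeSwap_of_reachable hα.1 hβ.1 hm, Equiv.swap_apply_of_ne_of_ne]
    · exact hmiss
    · exact fun hcα ↦ hprev m (by omega) (hcα ▸ hmiss) hm
    · exact fun hcβ ↦ hβ.2 ⟨_, hyl, Sym2.mem_mk_left _ _, hcβ⟩
  · rwa [missingColors_kempeSwap_of_not_reachable hm]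

lemma disjoint_missingColors [Fintype V]
    (hc : IsProperEdgeColoring (G.deleteEdges {s(x, y)}) k c) (hz : IsMultifan G k c x y p z)
    (hnc : ¬ EdgeColorable G k) {β : ℕ} (hβ : β ∈ missingColors (G.deleteEdges {s(x, y)}) k c y)
    {i j : ℕ} (hij : i < j) (hj : j ≤ p) :
    Disjoint (missingColors (G.deleteEdges {s(x, y)}) k c (z i))
      (missingColors (G.deleteEdges {s(x, y)}) k c (z j)) := by
  induction j using Nat.strong_induction_on generalizing i with
  | _ j ih =>
  rw [Set.disjoint_left]
  intro α hαi hαj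
  have huniq : ∀ m ≤ j, α ∈ missingColors (G.deleteEdges {s(x, y)}) k c (z m) →
      m = i ∨ m = j := by
    intro m hm hαm
    by_contra! h
    rcases lt_or_gt_of_ne h.1 with hmi | him
    · exact Set.disjoint_left.1 (ih i hij hmi (by omega)) hαm hαi
    · exact Set.disjoint_left.1 (ih m (by omega) him (by omega)) hαi hαm
  classical
  set C := chainGraph (G.deleteEdges {s(x, y)}) c α β
  have hyC : C.degree y ≤ 1 := hc.degree_chainGraph_le_one (Or.inr hβ)
  have hiC : C.degree (z i) ≤ 1 := hc.degree_chainGraph_le_one (Or.inl hαi)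
  have hjC : C.degree (z j) ≤ 1 := hc.degree_chainGraph_le_one (Or.inl hαj)
  have hyi : y ≠ z i := (hz.adj i (by omega)).ne
  have hyj : y ≠ z j := (hz.adj j hj).ne
  have hzij : z i ≠ z j := hz.ne (by omega) hj hij.ne
  -- `y`, `z i` and `z j` are ends of `(α, β)`-chains, which are paths
  by_cases hri : C.Reachable y (z i)
  · have hrj : ¬ C.Reachable y (z j) := hri.not_reachable_of_degree_le_one
      (fun _ ↦ hc.degree_chainGraph_le_two) hyi hyj hzij hyC hiC hjC
    refine hnc ((hz.mono hj).edgeColorable_of_not_reachable hc hαj hβ (fun h ↦ hrj h.symm)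
      fun m hm hαm h ↦ hrj ?_)
    rcases huniq m hm.le hαm with rfl | rfl
    · exact hri.trans h.symm
    · omega
  · refine hnc ((hz.mono (by omega)).edgeColorable_of_not_reachable hc hαi hβ
      (fun h ↦ hri h.symm) fun m hm hαm _ ↦ ?_)
    rcases huniq m (by omega) hαm with rfl | rfl <;> omega

lemma exists_color_eq_of_maximal
    (hc : IsProperEdgeColoring (G.deleteEdges {s(x, y)}) k c) (hz : IsMultifan G k c x y p z)
    (hmax : ∀ q w, IsMultifan G k c x y q w → q ≤ p) (hnc : ¬ EdgeColorable G k) {i : ℕ}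
    (hi : i ≤ p) {α : ℕ} (hα : α ∈ missingColors (G.deleteEdges {s(x, y)}) k c (z i)) :
    ∃ l ∈ Icc 1 p, c s(y, z l) = α := by
  obtain ⟨e, he, hye, rfl⟩ : ∃ e ∈ (G.deleteEdges {s(x, y)}).edgeSet, y ∈ e ∧ c e = α :=
    not_not.1 fun h ↦ hnc (hz.edgeColorable_of_mem_missingColors hc hi hα ⟨hα.1, h⟩)
  obtain ⟨w, rfl⟩ := Sym2.mem_iff_exists.1 hye
  obtain ⟨hyw, hwx⟩ := mem_edgeSet_deleteEdges_singleton.1 he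
  by_cases hfan : ∀ l ≤ p, z l ≠ w
  · have := hmax _ _ (hz.snoc hyw hfan hi hα)
    omega
  · simp only [not_forall, not_not] at hfan
    obtain ⟨l, hl, rfl⟩ := hfan
    refine ⟨l, mem_Icc.2 ⟨Nat.one_le_iff_ne_zero.2 ?_, hl⟩, rfl⟩
    rintro rfl
    exact hwx (by rw [hz.zero, Sym2.eq_swap])

open Classical in
/-- The colours missing at the vertices of a maximal multifan are distinct colours of fan edges. -/
lemma sum_card_missingColors_le [Fintype V]
    (hc : IsProperEdgeColoring (G.deleteEdges {s(x, y)}) k c) (hz : IsMultifan G k c x y p z)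
    (hmax : ∀ q w, IsMultifan G k c x y q w → q ≤ p) (hnc : ¬ EdgeColorable G k) {β : ℕ}
    (hβ : β ∈ missingColors (G.deleteEdges {s(x, y)}) k c y) :
    ∑ i ∈ insert 0 (Icc 1 p),
      #{α ∈ Icc 1 k | α ∈ missingColors (G.deleteEdges {s(x, y)}) k c (z i)} ≤ p := by
  have hS : ∀ i ∈ insert 0 (Icc 1 p), i ≤ p := fun i hi ↦ by
    rcases mem_insert.1 hi with rfl | hi
    exacts [Nat.zero_le _, (mem_Icc.1 hi).2]
  rw [← card_biUnion fun i hi j hj hij ↦ ?_]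
  · calc _ ≤ #((Icc 1 p).image fun l ↦ c s(y, z l)) := card_le_card fun α hα ↦ ?_
      _ ≤ p := card_image_le.trans (by simp)
    obtain ⟨i, hi, hα⟩ := mem_biUnion.1 hα
    obtain ⟨l, hl, hlα⟩ :=
      hz.exists_color_eq_of_maximal hc hmax hnc (hS i hi) (mem_filter.1 hα).2
    exact mem_image.2 ⟨l, hl, hlα⟩
  · have hdisj {i j : ℕ} (hij : i < j) (hj : j ≤ p) :
        Disjoint (α := Finset ℕ)
          {α ∈ Icc 1 k | α ∈ missingColors (G.deleteEdges {s(x, y)}) k c (z i)}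
          {α ∈ Icc 1 k | α ∈ missingColors (G.deleteEdges {s(x, y)}) k c (z j)} :=
      disjoint_left.2 fun α hαi hαj ↦ Set.disjoint_left.1
        (hz.disjoint_missingColors hc hnc hβ hij hj) (mem_filter.1 hαi).2 (mem_filter.1 hαj).2
    rcases hij.lt_or_gt with hij | hij
    exacts [hdisj hij (hS j hj), (hdisj hij (hS i hi)).symm]

end IsMultifan

theorem vizing_adjacency [Fintype V] [DecidableEq V] {G : SimpleGraph V} [DecidableRel G.Adj]
    {k : ℕ} {x y : V} (hxy : G.Adj x y) (hcol : EdgeColorable (G.deleteEdges {s(x, y)}) k)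
    (hnc : ¬ EdgeColorable G k) (hdeg : ∀ v, G.degree v ≤ k) :
    k + 1 ≤ G.degree x + #{u ∈ G.neighborFinset y | u ≠ x ∧ G.degree u = k} := by
  classical
  obtain ⟨c, hc⟩ := hcol
  obtain ⟨β, hβ⟩ := exists_mem_missingColors_of_degree_lt (c := c)
    ((degree_deleteEdges_singleton_lt hxy (Sym2.mem_mk_right x y)).trans_le (hdeg y))
  obtain ⟨p, z, hz, hmax⟩ := IsMultifan.exists_maximal (k := k) (c := c) hxy
  set M : ℕ → Finset ℕ :=
    fun i ↦ {α ∈ Icc 1 k | α ∈ missingColors (G.deleteEdges {s(x, y)}) k c (z i)}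
  have hsum : ∑ i ∈ insert 0 (Icc 1 p), #(M i) ≤ p :=
    hz.sum_card_missingColors_le hc hmax hnc hβ
  have hM (i : ℕ) : k ≤ #(M i) + (G.deleteEdges {s(x, y)}).degree (z i) :=
    le_card_missingColors_add_degree (z i)
  have hM0 : k + 1 ≤ #(M 0) + G.degree x := by
    have h0 := hM 0
    rw [hz.zero] at h0
    have := degree_deleteEdges_singleton_lt hxy (Sym2.mem_mk_left x y)
    omega
  have hlow : #(M 0) + #{l ∈ Icc 1 p | ¬ G.degree (z l) = k} ≤
      ∑ i ∈ insert 0 (Icc 1 p), #(M i) := by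
    rw [sum_insert (by simp), card_filter (fun l ↦ ¬ G.degree (z l) = k)]
    gcongr with l
    split_ifs with hl
    · exact Nat.zero_le _
    · have := hM l
      have := degree_le_of_le (v := z l) (deleteEdges_le (G := G) {s(x, y)})
      have := hdeg (z l)
      omega
  have hsplit := card_filter_add_card_filter_not (s := Icc 1 p) fun l ↦ G.degree (z l) = k
  simp only [Nat.card_Icc, add_tsub_cancel_right] at hsplit
  have := hz.card_filter_le (G.degree · = k)
  omega

section Consequences

variable [Fintype V] [DecidableEq V] {H : SimpleGraph V} [DecidableRel H.Adj] {k : ℕ}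

lemma two_le_card_neighborFinset_degree_eq (hdeg : ∀ v, H.degree v ≤ k) {u w : V}
    (huw : H.Adj u w)
    (hval : k + 1 ≤ H.degree w + #{n ∈ H.neighborFinset u | n ≠ w ∧ H.degree n = k}) :
    2 ≤ #{n ∈ H.neighborFinset u | H.degree n = k} := by
  have hsub : {n ∈ H.neighborFinset u | n ≠ w ∧ H.degree n = k} ⊆
      {n ∈ H.neighborFinset u | H.degree n = k} :=
    fun n hn ↦ mem_filter.2 ⟨(mem_filter.1 hn).1, (mem_filter.1 hn).2.2⟩
  by_cases hw : H.degree w = k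
  · have hins : insert w {n ∈ H.neighborFinset u | n ≠ w ∧ H.degree n = k} ⊆
        {n ∈ H.neighborFinset u | H.degree n = k} :=
      insert_subset (mem_filter.2 ⟨(mem_neighborFinset _ _ _).2 huw, hw⟩) hsub
    have := card_le_card hins
    rw [card_insert_of_notMem (by simp)] at this
    omega
  · have := card_le_card hsub
    have := hdeg w
    omega

lemma adj_of_adj_of_forall_card_le_two {G : SimpleGraph V} [DecidableRel G.Adj] (hHG : H ≤ G)
    (hdeg : ∀ v, G.degree v ≤ k)
    (hcore : ∀ v, G.degree v = k → #{w ∈ G.neighborFinset v | G.degree w = k} ≤ 2)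
    (hval : ∀ x y, H.Adj x y →
      k + 1 ≤ H.degree x + #{u ∈ H.neighborFinset y | u ≠ x ∧ H.degree u = k})
    {u w v : V} (huw : H.Adj u w) (huv : G.Adj u v) : H.Adj u v := by
  by_contra hnH
  have hdegH (v : V) : H.degree v ≤ G.degree v := degree_le_of_le hHG
  have hlt : H.degree u < G.degree u := by
    simp_rw [← card_neighborSet_eq_degree]
    exact Set.card_lt_card ⟨fun n hn ↦ hHG hn, fun h ↦ hnH (h huv)⟩
  obtain ⟨n, hn, hnk⟩ : ∃ n ∈ H.neighborFinset u, H.degree n = k := by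
    have := two_le_card_neighborFinset_degree_eq (fun v ↦ (hdegH v).trans (hdeg v)) huw
      (hval w u huw.symm)
    obtain ⟨n, hn⟩ := card_pos.1 (by omega : 0 < #{n ∈ H.neighborFinset u | H.degree n = k})
    exact ⟨n, (mem_filter.1 hn).1, (mem_filter.1 hn).2⟩
  rw [mem_neighborFinset] at hn
  have hGn : G.degree n = k := le_antisymm (hdeg n) (hnk ▸ hdegH n)
  have hA : {m ∈ H.neighborFinset n | m ≠ u ∧ H.degree m = k} ⊆
      {m ∈ G.neighborFinset n | G.degree m = k} := fun m hm ↦ by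
    simp only [mem_filter, mem_neighborFinset] at hm ⊢
    exact ⟨hHG hm.1, le_antisymm (hdeg m) (hm.2.2 ▸ hdegH m)⟩
  have hun := hval u n hn
  have hGu : G.degree u = k := by
    have := (card_le_card hA).trans (hcore n hGn)
    have := hdeg u
    omega
  have hins := card_le_card (insert_subset
    (mem_filter.2 ⟨(mem_neighborFinset _ _ _).2 (hHG hn).symm, hGu⟩) hA)
  rw [card_insert_of_notMem (by simp)] at hins
  have := hcore n hGn
  omega

end Consequences

end VizingAdjacency

open Classical in
theorem stmt_7_general {V : Type*} [Fintype V] (G : SimpleGraph V) (hconn : G.Connected)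
    (hclass2b : ¬ EdgeColorable G G.maxDegree)
    (hcore : ∀ v, (G.induce {v : V | G.degree v = G.maxDegree}).degree v ≤ 2) :
    ∀ v : V, 2 ≤ ((G.neighborFinset v).filter fun w => G.degree w = G.maxDegree).card := by
  obtain ⟨H, hHG, hHnc, hHcrit⟩ := exists_critical_subgraph hclass2b
  have hdegH (v : V) : H.degree v ≤ G.maxDegree :=
    (degree_le_of_le hHG).trans (G.degree_le_maxDegree v)
  have hval (x y : V) (hxy : H.Adj x y) := vizing_adjacency hxy (hHcrit x y hxy) hHnc hdegH
  have hclosed {u w v : V} (huw : H.Adj u w) (huv : G.Adj u v) : H.Adj u v :=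
    adj_of_adj_of_forall_card_le_two hHG G.degree_le_maxDegree
      (fun v hv ↦ (degree_induce_setOf (p := (G.degree · = G.maxDegree)) ⟨v, hv⟩).symm.trans_le
        (hcore ⟨v, hv⟩))
      hval huw huv
  obtain ⟨x₀, y₀, hxy₀⟩ := exists_adj_of_not_edgeColorable hHnc
  have hedge (v : V) : ∃ w, H.Adj v w :=
    (hconn.preconnected x₀ v).mem_of_adj_mem (s := {v | ∃ w, H.Adj v w})
      (fun _ _ huv ⟨_, huw⟩ ↦ ⟨_, (hclosed huw huv).symm⟩) ⟨y₀, hxy₀⟩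
  obtain rfl : H = G := le_antisymm hHG fun u v huv ↦ hclosed (hedge u).choose_spec huv
  intro v
  obtain ⟨w, hvw⟩ := hedge v
  exact two_le_card_neighborFinset_degree_eq hdegH hvw (hval w v hvw.symm)

open Classical in
theorem stmt_7 {V : Type*} [Fintype V] (G : SimpleGraph V) (hconn : G.Connected)
    (hclass2a : EdgeColorable G (G.maxDegree + 1))
    (hclass2b : ¬ EdgeColorable G G.maxDegree)
    (hcore : ∀ v, (G.induce {v : V | G.degree v = G.maxDegree}).degree v ≤ 2)
    (hΔ : 3 ≤ G.maxDegree) :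
    ∀ v : V, 2 ≤ ((G.neighborFinset v).filter fun w => G.degree w = G.maxDegree).card :=
  stmt_7_general G hconn hclass2b hcore
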